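/- arXiv:0911.2048 — 8 statements merged into one kernel-verified Lean document; each statement's English description precedes it below -/
import Mathlib

section
/- Every finite nilpotent group admits a totally round cycle; that is, every finite nilpotent group is round. -/
/-!
Induction on `|G|`. A nontrivial finite nilpotent group has a central element `z ≠ 1`, say of
order `p`, and `Q = G ⧸ ⟨z⟩` is a smaller nilpotent group, so it carries a totally round
cycle `q` of length `n' = |G| / p`. Writing `i = n' d + r` with `r < n'`, the cycle
`g i = s (q r) * z ^ d`, with `s` a section of `G → Q`, is totally round: since `z` is central
and the carries in `(i + m) / n'` only depend on `r`, a product of `k` shifted values of `g` is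
a function of `r` times `z ^ (k d)`. Its image in `Q` determines `r` because `q` is `k`-round,
and then `z ^ (k d)` determines `d` because `k` is prime to `p`.
-/

/-- A cycle of length `n = Nat.card G` over `G` is a function `ZMod n → G`.
It is `k`-round if for all integers `m₁, …, m_k`, the map
`i ↦ g (i+m₁) * g (i+m₂) * ⋯ * g (i+m_k)` is a bijection from `ZMod n` to `G`. -/
def IsRoundCycle (G : Type*) [Group G] (k : ℕ) (g : ZMod (Nat.card G) → G) : Prop :=
  ∀ m : Fin k → ℤ,
    Function.Bijective fun i : ZMod (Nat.card G) =>
      (List.ofFn fun j : Fin k => g (i + (m j : ZMod (Nat.card G)))).prod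

/-- `G` is `k`-round if it admits a `k`-round cycle. -/
def IsKRound (G : Type*) [Group G] (k : ℕ) : Prop :=
  ∃ g : ZMod (Nat.card G) → G, IsRoundCycle G k g

/-- A cycle is totally round if it is `k`-round for every `k ≥ 1` with `gcd(k, n) = 1`. -/
def IsTotallyRoundCycle (G : Type*) [Group G] (g : ZMod (Nat.card G) → G) : Prop :=
  ∀ k : ℕ, 1 ≤ k → Nat.gcd k (Nat.card G) = 1 → IsRoundCycle G k g

/-- `G` is round if it admits a totally round cycle. -/
def IsRound (G : Type*) [Group G] : Prop :=
  ∃ g : ZMod (Nat.card G) → G, IsTotallyRoundCycle G g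

open Subgroup

theorem Nat.add_div_eq_div_add_mod_add_div (v w : ℕ) {n : ℕ} (hn : 0 < n) :
    (v + w) / n = v / n + (v % n + w) / n := by
  conv_lhs => rw [← Nat.div_add_mod v n, add_assoc, Nat.mul_add_div hn]

section
variable {G : Type*} [Group G]

theorem isRound_of_subsingleton [Subsingleton G] : IsRound G :=
  ⟨fun _ => 1, fun _ _ _ _ => (Nat.bijective_iff_surjective_and_card _).2
    ⟨fun _ => ⟨0, Subsingleton.elim _ _⟩, Nat.card_zmod _⟩⟩

theorem list_prod_ofFn_mul_pow_of_mem_center {z : G} (hz : z ∈ center G) {k : ℕ}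
    (a : Fin k → G) (e : Fin k → ℕ) :
    (List.ofFn fun j => a j * z ^ e j).prod = (List.ofFn a).prod * z ^ ∑ j, e j := by
  induction k with
  | zero => simp
  | succ k ih =>
    have hcomm : Commute (z ^ e 0) (List.ofFn fun j => a j.succ).prod :=
      Commute.pow_left (Commute.symm (mem_center_iff.mp hz _)) _
    rw [List.ofFn_succ, List.ofFn_succ, List.prod_cons, List.prod_cons, ih, Fin.sum_univ_succ,
      pow_add, mul_assoc (a 0), ← mul_assoc (z ^ e 0), hcomm.eq]
    simp only [mul_assoc]

theorem normal_zpowers_of_mem_center {z : G} (hz : z ∈ center G) : (zpowers z).Normal :=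
  ⟨fun a ha g => by
    rw [mem_center_iff.mp (zpowers_le.mpr hz ha) g, mul_inv_cancel_right]
    exact ha⟩

theorem eq_of_pow_mul_eq_pow_mul {z : G} {k a b : ℕ} (hk : Nat.Coprime k (orderOf z))
    (ha : a < orderOf z) (hb : b < orderOf z) (h : z ^ (k * a) = z ^ (k * b)) : a = b :=
  (Nat.ModEq.cancel_left_of_coprime hk.symm (pow_eq_pow_iff_modEq.mp h)).eq_of_lt_of_lt ha hb

theorem card_eq_card_quotient_zpowers_mul_orderOf (z : G) :
    Nat.card G = Nat.card (G ⧸ zpowers z) * orderOf z := by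
  rw [card_eq_card_quotient_mul_card_subgroup (zpowers z), Nat.card_zpowers]

end

section
variable {G : Type*} [Group G] [Finite G] (z : G)

local notation "n'" => Nat.card (G ⧸ zpowers z)

noncomputable def castCardQuotient : ZMod (Nat.card G) →+* ZMod n' :=
  ZMod.castHom (Dvd.intro _ (card_eq_card_quotient_zpowers_mul_orderOf z).symm) _

theorem val_castCardQuotient (i : ZMod (Nat.card G)) :
    (castCardQuotient z i).val = i.val % n' := by
  rw [castCardQuotient, ZMod.castHom_apply, ZMod.cast_eq_val, ZMod.val_natCast]

theorem pow_val_add_div (i m : ZMod (Nat.card G)) :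
    z ^ ((i + m).val / n') =
      z ^ (i.val / n') * z ^ (((castCardQuotient z i).val + m.val) / n') := by
  have hdigit : ∀ a : ℕ, a % Nat.card G / n' = a / n' % orderOf z := fun a => by
    rw [card_eq_card_quotient_zpowers_mul_orderOf z, Nat.mod_mul_right_div_self]
  rw [ZMod.val_add, hdigit, pow_mod_orderOf, val_castCardQuotient, ← pow_add,
    Nat.add_div_eq_div_add_mod_add_div _ _ Nat.card_pos]

noncomputable def liftCycle (q : ZMod n' → G ⧸ zpowers z) (i : ZMod (Nat.card G)) : G :=
  (q (castCardQuotient z i)).out * z ^ (i.val / n')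

theorem list_prod_ofFn_liftCycle (hz : z ∈ center G) (q : ZMod n' → G ⧸ zpowers z) {k : ℕ}
    (m : Fin k → ℤ) (i : ZMod (Nat.card G)) :
    (List.ofFn fun j => liftCycle z q (i + m j)).prod =
      (List.ofFn fun j => (q (castCardQuotient z i + m j)).out).prod *
        z ^ (∑ j, ((castCardQuotient z i).val + (m j : ZMod (Nat.card G)).val) / n') *
        z ^ (k * (i.val / n')) := by
  simp only [liftCycle, pow_val_add_div, map_add, map_intCast, ← pow_add]
  rw [list_prod_ofFn_mul_pow_of_mem_center hz, Finset.sum_add_distrib, Finset.sum_const,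
    Finset.card_univ, Fintype.card_fin, smul_eq_mul, add_comm, pow_add, mul_assoc]

theorem val_div_lt_orderOf (i : ZMod (Nat.card G)) : i.val / n' < orderOf z :=
  Nat.div_lt_of_lt_mul (card_eq_card_quotient_zpowers_mul_orderOf z ▸ ZMod.val_lt i)

theorem isTotallyRoundCycle_liftCycle (hz : z ∈ center G) [(zpowers z).Normal]
    {q : ZMod n' → G ⧸ zpowers z} (hq : IsTotallyRoundCycle (G ⧸ zpowers z) q) :
    IsTotallyRoundCycle G (liftCycle z q) := by
  intro k hk hcop m
  refine (Nat.bijective_iff_injective_and_card _).2 ⟨fun i i' h => ?_, Nat.card_zmod _⟩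
  simp only [list_prod_ofFn_liftCycle z hz] at h
  have hcard := card_eq_card_quotient_zpowers_mul_orderOf z
  have hindex : castCardQuotient z i = castCardQuotient z i' := by
    refine (hq k hk (Nat.Coprime.coprime_dvd_right (Dvd.intro _ hcard.symm) hcop) m).injective ?_
    simpa only [map_mul, map_pow, map_list_prod, List.map_ofFn, Function.comp_def,
      QuotientGroup.mk'_apply, QuotientGroup.out_eq',
      (QuotientGroup.eq_one_iff z).2 (mem_zpowers z), one_pow, mul_one]
      using congrArg (QuotientGroup.mk' (zpowers z)) h
  rw [hindex] at h
  have hdiv : i.val / n' = i'.val / n' :=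
    eq_of_pow_mul_eq_pow_mul (Nat.Coprime.coprime_dvd_right (Dvd.intro_left _ hcard.symm) hcop)
      (val_div_lt_orderOf z i) (val_div_lt_orderOf z i') (mul_left_cancel h)
  have hmod : i.val % n' = i'.val % n' := by
    rw [← val_castCardQuotient, ← val_castCardQuotient, hindex]
  exact ZMod.val_injective _ (by rw [← Nat.div_add_mod i.val n', hdiv, hmod, Nat.div_add_mod])

end

/-- Every finite nilpotent group admits a totally round cycle;
that is, every finite nilpotent group is round. -/
theorem statement1 (G : Type*) [Group G] [Finite G] (h : Group.IsNilpotent G) :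
    IsRound G := by
  induction hn : Nat.card G using Nat.strong_induction_on generalizing G with
  | _ n ih =>
  rcases subsingleton_or_nontrivial G with hG | hG
  · exact isRound_of_subsingleton
  obtain ⟨⟨z, hz⟩, hz1⟩ := ne_bot_iff_exists_ne_one.mp (Group.IsNilpotent.center_ne_bot G)
  have := normal_zpowers_of_mem_center hz
  have hlt : Nat.card (G ⧸ zpowers z) < n := by
    rw [← hn, card_eq_card_quotient_zpowers_mul_orderOf z]
    exact lt_mul_right Nat.card_pos
      (lt_of_le_of_ne (orderOf_pos z) (Ne.symm (orderOf_eq_one_iff.not.mpr (by simpa using hz1))))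
  obtain ⟨q, hq⟩ := ih _ hlt (G ⧸ zpowers z) inferInstance rfl
  exact ⟨_, isTotallyRoundCycle_liftCycle z hz hq⟩
end

section
/- Let G be a finite group of order n. If G is k-round for some integer k > n², then G is nilpotent. -/
/-!
A `k`-round cycle `g` is a bijection `ZMod n ≃ G`, and taking all shifts equal shows that
`x ↦ x ^ k` is a bijection, so `k` is prime to `n`. Splitting `k = a + b` and shifting the last
`b` factors by `τ` shows that `x ^ a * y ^ b = c` has exactly one solution `(g i, g (i + τ))`
for each `τ`, hence `n` solutions in all.

Let `P` be a Sylow `p`-subgroup, `r = |P|`, `s = [G : P]`. Choosing `a < n ≤ k` with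
`a ≡ k [MOD r]` and `a ≡ 0 [MOD s]`, the solutions of `x ^ a * y ^ b = 1` are exactly the pairs
with `x ^ s = 1` and `y ^ r = 1`, so the two solution sets have sizes multiplying to `n`. With
`r α + s β = 1`, the injection `x ↦ (x ^ (r α), x ^ (s β))` into their product is then onto, so
any `u` with `u ^ r = 1` and `w` with `w ^ s = 1` are powers of one element and commute. Every
Sylow `q`-subgroup with `q ≠ p` has order dividing `s`, so it centralises `P`; the normaliser of
`P` therefore contains a Sylow subgroup for every prime and is all of `G`.
-/

open Function

section

variable {G : Type*} [Group G]

theorem coprime_card_of_pow_bijective [Finite G] {k : ℕ} (h : Bijective fun x : G => x ^ k) :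
    k.Coprime (Nat.card G) := by
  refine Nat.coprime_of_dvd fun p hp hpk hpn => ?_
  have := Fact.mk hp
  obtain ⟨x, hx⟩ := exists_prime_orderOf_dvd_card' p hpn
  have hx1 : x = 1 := h.injective <| by
    simp only [one_pow, ← orderOf_dvd_iff_pow_eq_one, hx, hpk]
  exact hp.one_lt.ne' (hx ▸ hx1 ▸ orderOf_one)

theorem pow_mul_pow_eq_one_iff {r s a b : ℕ} (hrs : r.Coprime s) (ha : s ∣ a) (hb : r ∣ b)
    (har : a.Coprime r) (hbs : b.Coprime s) {x y : G} (hx : x ^ (r * s) = 1)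
    (hy : y ^ (r * s) = 1) : x ^ a * y ^ b = 1 ↔ x ^ s = 1 ∧ y ^ r = 1 := by
  obtain ⟨a, rfl⟩ := ha
  obtain ⟨b, rfl⟩ := hb
  constructor
  · intro h
    have hxy : x ^ (s * a) = (y ^ (r * b))⁻¹ := eq_inv_of_mul_eq_one_left h
    have hxa : x ^ (s * a) = 1 := by
      refine (pow_eq_one_iff_of_coprime hrs).mp ⟨?_, ?_⟩
      · rw [← pow_mul, show s * a * r = r * s * a by ring, pow_mul, hx, one_pow]
      · rw [hxy, inv_pow, ← pow_mul, show r * b * s = r * s * b by ring, pow_mul, hy, one_pow,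
          inv_one]
    have hyb : y ^ (r * b) = 1 := by rwa [hxa, one_mul] at h
    refine ⟨(pow_eq_one_iff_of_coprime (Nat.Coprime.coprime_mul_left har)).mp ⟨?_, ?_⟩,
      (pow_eq_one_iff_of_coprime (Nat.Coprime.coprime_mul_left hbs)).mp ⟨?_, ?_⟩⟩
    · rwa [← pow_mul]
    · rwa [← pow_mul, mul_comm]
    · rwa [← pow_mul]
    · rwa [← pow_mul]
  · rintro ⟨hxs, hyr⟩
    rw [pow_mul, pow_mul, hxs, hyr, one_pow, one_pow, one_mul]

theorem commute_of_card_mul_card_eq_card [Finite G] {r s : ℕ} (hrs : r * s = Nat.card G)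
    (hcop : r.Coprime s)
    (hcard : Nat.card {x : G // x ^ s = 1} * Nat.card {y : G // y ^ r = 1} = Nat.card G)
    {u w : G} (hu : u ^ r = 1) (hw : w ^ s = 1) : Commute u w := by
  set α := Nat.gcdA r s
  set β := Nat.gcdB r s
  have hpow : ∀ (x : G) (c : ℤ), x ^ ((r * s : ℕ) * c) = 1 := fun x c => by
    rw [zpow_mul, zpow_natCast, hrs, pow_card_eq_one', one_zpow]
  let φ : G → {x : G // x ^ s = 1} × {y : G // y ^ r = 1} := fun x =>
    (⟨x ^ (r * α), by rw [← zpow_natCast, ← zpow_mul, ← hpow x α]; push_cast; ring_nf⟩,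
     ⟨x ^ (s * β), by rw [← zpow_natCast, ← zpow_mul, ← hpow x β]; push_cast; ring_nf⟩)
  have hsplit : ∀ x : G, x ^ ((r : ℤ) * α) * x ^ ((s : ℤ) * β) = x := fun x => by
    rw [← zpow_add, ← Nat.gcd_eq_gcd_ab, hcop.gcd_eq_one, Nat.cast_one, zpow_one]
  have hinj : Injective φ := fun x y hxy => by
    simp only [φ, Prod.mk.injEq, Subtype.mk.injEq] at hxy
    rw [← hsplit x, ← hsplit y, hxy.1, hxy.2]
  obtain ⟨x, hx⟩ := ((Nat.bijective_iff_injective_and_card φ).mpr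
    ⟨hinj, by rw [Nat.card_prod, hcard]⟩).surjective (⟨w, hw⟩, ⟨u, hu⟩)
  simp only [φ, Prod.mk.injEq, Subtype.mk.injEq] at hx
  rw [← hx.1, ← hx.2]
  exact Commute.zpow_zpow_self x _ _

theorem Subgroup.eq_top_of_forall_exists_sylow_le [Finite G] (H : Subgroup G)
    (h : ∀ (p : ℕ) [Fact p.Prime], ∃ P : Sylow p G, ↑P ≤ H) : H = ⊤ := by
  rw [← Subgroup.index_eq_one]
  by_contra hH
  obtain ⟨p, hp, hpH⟩ := Nat.exists_prime_and_dvd hH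
  have := Fact.mk hp
  obtain ⟨P, hPH⟩ := h p
  exact P.not_dvd_index (hpH.trans (Subgroup.index_dvd_of_le hPH))

theorem Sylow.normal_of_forall_commute [Finite G] {p : ℕ} [Fact p.Prime] (P : Sylow p G)
    (h : ∀ u w : G, u ^ Nat.card P = 1 → w ^ P.index = 1 → Commute u w) :
    (P : Subgroup G).Normal := by
  rw [← Subgroup.normalizer_eq_top_iff]
  refine Subgroup.eq_top_of_forall_exists_sylow_le _ fun q _ => ?_
  obtain rfl | hqp := eq_or_ne q p
  · exact ⟨P, Subgroup.le_normalizer⟩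
  obtain ⟨Q⟩ : Nonempty (Sylow q G) := inferInstance
  refine ⟨Q, le_trans (fun y hy => ?_) (Subgroup.centralizer_le_normalizer _)⟩
  have hQP : Nat.card Q ∣ P.index := by
    have hQG := Subgroup.card_subgroup_dvd_card (Q : Subgroup G)
    rw [← P.card_mul_index] at hQG
    exact (IsPGroup.coprime_card_of_ne q p hqp (Q : Subgroup G) (P : Subgroup G) Q.isPGroup'
      P.isPGroup').dvd_of_dvd_mul_left hQG
  have hy : y ^ P.index = 1 :=
    orderOf_dvd_iff_pow_eq_one.mp (((Q : Subgroup G).orderOf_dvd_natCard hy).trans hQP)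
  exact Subgroup.mem_centralizer_iff.mpr fun x hx =>
    (h x y (orderOf_dvd_iff_pow_eq_one.mp ((P : Subgroup G).orderOf_dvd_natCard hx)) hy).eq

namespace IsRoundCycle

variable {k : ℕ} {g : ZMod (Nat.card G) → G}

theorem bijective_pow_comp (hg : IsRoundCycle G k g) : Bijective fun i => g i ^ k := by
  simpa [List.ofFn_const] using hg fun _ => 0

theorem bijective [Finite G] (hg : IsRoundCycle G k g) : Bijective g :=
  (Nat.bijective_iff_injective_and_card g).mpr
    ⟨.of_comp hg.bijective_pow_comp.injective, Nat.card_zmod _⟩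

theorem bijective_pow [Finite G] (hg : IsRoundCycle G k g) : Bijective fun x : G => x ^ k :=
  (Bijective.of_comp_iff _ hg.bijective).mp hg.bijective_pow_comp

theorem bijective_pow_mul_pow {a b : ℕ} (hg : IsRoundCycle G (a + b) g) (τ : ZMod (Nat.card G)) :
    Bijective fun i => g i ^ a * g (i + τ) ^ b := by
  simpa [List.ofFn_add, List.ofFn_const, ZMod.intCast_zmod_cast] using
    hg (Fin.append (fun _ => 0) fun _ => (τ.cast : ℤ))

theorem card_pow_mul_pow [Finite G] {a b : ℕ} (hg : IsRoundCycle G (a + b) g) (c : G) :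
    Nat.card {q : G × G // q.1 ^ a * q.2 ^ b = c} = Nat.card G := by
  let e : ZMod (Nat.card G) × ZMod (Nat.card G) ≃ G × G :=
    (Equiv.prodShear (Equiv.refl _) Equiv.addLeft).trans
      (Equiv.prodCongr (.ofBijective g hg.bijective) (.ofBijective g hg.bijective))
  rw [← Nat.card_congr (e.subtypeEquiv fun _ => Iff.rfl)]
  refine (Nat.card_eq_of_bijective (fun p => p.1.2) ⟨?_, fun τ => ?_⟩).trans (Nat.card_zmod _)
  · rintro ⟨⟨i, τ⟩, hi⟩ ⟨⟨j, _⟩, hj⟩ rfl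
    obtain rfl : i = j := (hg.bijective_pow_mul_pow τ).injective (hi.trans hj.symm)
    rfl
  · obtain ⟨i, hi⟩ := (hg.bijective_pow_mul_pow τ).surjective c
    exact ⟨⟨(i, τ), hi⟩, rfl⟩

theorem card_pow_eq_one_mul_card_pow_eq_one [Finite G] {r s : ℕ} (hg : IsRoundCycle G k g)
    (hrs : r * s = Nat.card G) (hcop : r.Coprime s) (hk : Nat.card G ≤ k) :
    Nat.card {x : G // x ^ s = 1} * Nat.card {y : G // y ^ r = 1} = Nat.card G := by
  have hkn : k.Coprime (r * s) := hrs ▸ coprime_card_of_pow_bijective hg.bijective_pow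
  have hr0 : r ≠ 0 := left_ne_zero_of_mul (hrs ▸ Nat.card_pos.ne')
  have hs0 : s ≠ 0 := right_ne_zero_of_mul (hrs ▸ Nat.card_pos.ne')
  obtain ⟨a, hak, har, has⟩ : ∃ a, a < r * s ∧ a ≡ k [MOD r] ∧ a ≡ 0 [MOD s] :=
    ⟨_, Nat.chineseRemainder_lt_mul hcop k 0 hr0 hs0, (Nat.chineseRemainder hcop k 0).2⟩
  obtain ⟨b, rfl⟩ := Nat.exists_eq_add_of_le (hak.trans_le (hrs ▸ hk)).le
  have hsa : s ∣ a := Nat.modEq_zero_iff_dvd.mp has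
  have hrb : r ∣ b := Nat.modEq_zero_iff_dvd.mp (Nat.ModEq.add_left_cancel' a har).symm
  have hacop : a.Coprime r := har.gcd_eq.trans (hkn.coprime_dvd_right (dvd_mul_right r s))
  have hbcop : b.Coprime s := by
    have hb : b ≡ a + b [MOD s] := by simpa using (has.add_right b).symm
    exact hb.gcd_eq.trans (hkn.coprime_dvd_right (dvd_mul_left s r))
  have hpow : ∀ x : G, x ^ (r * s) = 1 := fun x => hrs ▸ pow_card_eq_one'
  rw [← Nat.card_prod, ← hg.card_pow_mul_pow 1]
  exact Nat.card_congr (Equiv.subtypeProdEquivProd.symm.trans (Equiv.subtypeEquivRight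
    fun q => (pow_mul_pow_eq_one_iff hcop hsa hrb hacop hbcop (hpow q.1) (hpow q.2)).symm))

end IsRoundCycle

end

/-- Let `G` be a finite group of order `n`. If `G` is `k`-round for some `k > n²`,
then `G` is nilpotent. -/
theorem statement2 (G : Type*) [Group G] [Finite G] (k : ℕ)
    (hk : Nat.card G ^ 2 < k) (h : IsKRound G k) :
    Group.IsNilpotent G := by
  obtain ⟨g, hg⟩ := h
  have hnk : Nat.card G ≤ k := (Nat.le_self_pow two_ne_zero _).trans hk.le
  refine (Group.isNilpotent_of_finite_tfae.out 0 3).mpr ?_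
  intro p _ P
  exact P.normal_of_forall_commute fun u w hu hw =>
    commute_of_card_mul_card_eq_card P.card_mul_index P.card_coprime_index
      (hg.card_pow_eq_one_mul_card_pow_eq_one P.card_mul_index P.card_coprime_index hnk) hu hw
end

section
/- Let G be a finite group of order n, and let k, l ≥ 1 be integers with l dividing k. If a cycle g of length n over G is k-round, then g is l-round. In particular, if G is k-round then G is l-round. -/
/-! If `k = d * l`, repeating the shifts `m₁, …, m_l` periodically `d` times turns the
`k`-fold product at `i` into the `d`-th power of the `l`-fold product at `i`. Bijectivity of
the former therefore forces injectivity of the latter, hence bijectivity since `G` is finite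
of order `n`. -/

theorem List.prod_ofFn_modNat {M : Type*} [Monoid M] {n : ℕ} (f : Fin n → M) (d : ℕ) :
    (List.ofFn fun j : Fin (d * n) => f j.modNat).prod = (List.ofFn f).prod ^ d := by
  have hblock (i : Fin d) (j : Fin n) (h : i * n + j < d * n) :
      (⟨i * n + j, h⟩ : Fin (d * n)).modNat = j :=
    Fin.ext <| by simp [Fin.modNat, Nat.add_mod, Nat.mod_eq_of_lt j.isLt]
  simp only [List.ofFn_mul, List.prod_flatten, hblock, List.ofFn_const, List.map_replicate,
    List.prod_replicate]

theorem IsRoundCycle.of_dvd {G : Type*} [Group G] [Finite G] {k l : ℕ} (hlk : l ∣ k)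
    {g : ZMod (Nat.card G) → G} (hg : IsRoundCycle G k g) : IsRoundCycle G l g := by
  obtain ⟨d, rfl⟩ := hlk
  rw [mul_comm] at hg
  intro m
  have hpow (i : ZMod (Nat.card G)) :
      (List.ofFn fun j : Fin (d * l) => g (i + (m j.modNat : ZMod (Nat.card G)))).prod =
        (List.ofFn fun j : Fin l => g (i + (m j : ZMod (Nat.card G)))).prod ^ d :=
    List.prod_ofFn_modNat (fun j => g (i + (m j : ZMod (Nat.card G)))) d
  have hinj : Function.Injective fun i : ZMod (Nat.card G) =>
      (List.ofFn fun j : Fin l => g (i + (m j : ZMod (Nat.card G)))).prod :=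
    Function.Injective.of_comp (f := fun x : G => x ^ d) <| by
      simpa only [hpow, Function.comp_def] using (hg fun j => m j.modNat).injective
  exact (Nat.bijective_iff_injective_and_card _).mpr ⟨hinj, Nat.card_zmod _⟩

theorem IsKRound.of_dvd {G : Type*} [Group G] [Finite G] {k l : ℕ} (hlk : l ∣ k)
    (hG : IsKRound G k) : IsKRound G l :=
  let ⟨g, hg⟩ := hG
  ⟨g, hg.of_dvd hlk⟩

theorem statement5_general (G : Type*) [Group G] [Finite G] (k l : ℕ) (hdvd : l ∣ k) :
    (∀ g : ZMod (Nat.card G) → G, IsRoundCycle G k g → IsRoundCycle G l g) ∧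
      (IsKRound G k → IsKRound G l) :=
  ⟨fun _ hg => hg.of_dvd hdvd, IsKRound.of_dvd hdvd⟩

/-- If `l ∣ k` and a cycle `g` of length `n` over `G` is `k`-round, then `g` is `l`-round.
In particular, if `G` is `k`-round then `G` is `l`-round. -/
theorem statement5 (G : Type*) [Group G] [Finite G] (k l : ℕ) (hk : 1 ≤ k) (hl : 1 ≤ l)
    (hdvd : l ∣ k) :
    (∀ g : ZMod (Nat.card G) → G, IsRoundCycle G k g → IsRoundCycle G l g) ∧
      (IsKRound G k → IsKRound G l) :=
  statement5_general G k l hdvd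
end

section
/- Let n ≥ 2 be an integer with prime power factorization n = p₁^{e₁} p₂^{e₂} ⋯ p_r^{e_r} (the p_i distinct primes), and set b_i = n / p_i^{e_i} for 1 ≤ i ≤ r. Then every integer k > n² can be written as k = c₁ b₁ + c₂ b₂ + ⋯ + c_r b_r with nonnegative integers c₁, …, c_r; that is, the Frobenius number of {b₁, …, b_r} is at most n². -/
/-! Write `q_p = p ^ e_p` and `b_p = n / q_p`. Since `b_p` is a unit modulo `q_p` while every other
`b_r` is divisible by `q_p`, one can choose `0 ≤ c_p < q_p` with `∑ c_p b_p ≡ k` modulo every `q_p`,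
hence modulo `n`. Each term `c_p b_p` is below `q_p b_p = n` and there are at most `n` primes, so the
sum is below `n² < k`; the difference is a multiple of `n = q_p b_p`, absorbed by one coefficient. -/

namespace Nat

theorem exists_lt_mul_modEq_of_coprime {b q : ℕ} [NeZero q] (h : b.Coprime q) (k : ℕ) :
    ∃ c < q, c * b ≡ k [MOD q] := by
  refine ⟨((k : ZMod q) * (ZMod.unitOfCoprime b h)⁻¹).val, ZMod.val_lt _, ?_⟩
  rw [← ZMod.natCast_eq_natCast_iff]
  push_cast
  rw [ZMod.natCast_zmod_val, mul_assoc, ← ZMod.coe_unitOfCoprime b h, Units.inv_mul, mul_one]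

theorem coprime_ordCompl_ordProj {n : ℕ} (hn : n ≠ 0) (p : ℕ) :
    Coprime (ordCompl[p] n) (ordProj[p] n) := by
  by_cases hp : p.Prime
  · exact (coprime_ordCompl hp hn).symm.pow_right _
  · rw [ordProj_of_not_prime n p hp]
    exact coprime_one_right _

theorem ordProj_dvd_ordCompl_of_ne {n p r : ℕ} (hp : p.Prime) (hr : r.Prime) (hpr : p ≠ r) :
    ordProj[p] n ∣ ordCompl[r] n := by
  have hcop : Coprime (ordProj[r] n) (ordProj[p] n) :=
    ((coprime_primes hr hp).mpr hpr.symm).pow _ _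
  exact dvd_div_of_mul_dvd (hcop.mul_dvd_of_dvd_of_dvd (ordProj_dvd n r) (ordProj_dvd n p))

theorem dvd_of_forall_ordProj_dvd {n m : ℕ} (hn : n ≠ 0)
    (h : ∀ p ∈ n.primeFactors, ordProj[p] n ∣ m) : n ∣ m := by
  refine (dvd_iff_prime_pow_dvd_dvd m n).mpr fun p e hp hpe => ?_
  rcases e.eq_zero_or_pos with rfl | he
  · simp
  have hpn : p ∈ n.primeFactors :=
    hp.mem_primeFactors ((dvd_pow_self p he.ne').trans hpe) hn
  exact ((hp.pow_dvd_iff_dvd_ordProj hn).mp hpe).trans (h p hpn)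

theorem modEq_of_forall_ordProj_modEq {n a b : ℕ} (hn : n ≠ 0)
    (h : ∀ p ∈ n.primeFactors, a ≡ b [MOD ordProj[p] n]) : a ≡ b [MOD n] := by
  simp_rw [modEq_iff_dvd, Int.natCast_dvd] at h ⊢
  exact dvd_of_forall_ordProj_dvd hn h

theorem exists_sum_mul_ordCompl_modEq {n : ℕ} (hn : n ≠ 0) (k : ℕ) :
    ∃ c : ℕ → ℕ, (∀ p ∈ n.primeFactors, c p < ordProj[p] n) ∧
      ∑ p ∈ n.primeFactors, c p * ordCompl[p] n ≡ k [MOD n] := by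
  have : ∀ p, NeZero (ordProj[p] n) := fun p => ⟨(ordProj_pos n p).ne'⟩
  choose c hc_lt hc_modEq using
    fun p => exists_lt_mul_modEq_of_coprime (coprime_ordCompl_ordProj hn p) k
  refine ⟨c, fun p _ => hc_lt p, modEq_of_forall_ordProj_modEq hn fun p hp => ?_⟩
  have hrest : ordProj[p] n ∣ ∑ r ∈ n.primeFactors.erase p, c r * ordCompl[r] n :=
    Finset.dvd_sum fun r hr => Dvd.dvd.mul_left (ordProj_dvd_ordCompl_of_ne
      (prime_of_mem_primeFactors hp) (prime_of_mem_primeFactors (Finset.mem_of_mem_erase hr))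
      (Finset.ne_of_mem_erase hr).symm) _
  calc ∑ r ∈ n.primeFactors, c r * ordCompl[r] n
      = c p * ordCompl[p] n + ∑ r ∈ n.primeFactors.erase p, c r * ordCompl[r] n :=
        (Finset.add_sum_erase _ _ hp).symm
    _ ≡ c p * ordCompl[p] n + 0 [MOD ordProj[p] n] := (modEq_zero_iff_dvd.mpr hrest).add_left _
    _ ≡ k [MOD ordProj[p] n] := hc_modEq p

theorem card_primeFactors_le (n : ℕ) : n.primeFactors.card ≤ n := by
  calc n.primeFactors.card ≤ (Finset.Ioc 0 n).card := Finset.card_le_card fun p hp =>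
        Finset.mem_Ioc.mpr ⟨(prime_of_mem_primeFactors hp).pos, le_of_mem_primeFactors hp⟩
    _ = n := by simp

theorem sum_mul_ordCompl_lt_sq {n : ℕ} (hn : n ≠ 0) {c : ℕ → ℕ}
    (hc : ∀ p ∈ n.primeFactors, c p < ordProj[p] n) :
    ∑ p ∈ n.primeFactors, c p * ordCompl[p] n < n ^ 2 := by
  have hterm : ∀ p ∈ n.primeFactors, c p * ordCompl[p] n ≤ n - 1 := fun p hp => by
    have : c p * ordCompl[p] n < ordProj[p] n * ordCompl[p] n :=
      Nat.mul_lt_mul_of_pos_right (hc p hp) (ordCompl_pos p hn)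
    rw [ordProj_mul_ordCompl_eq_self] at this
    omega
  calc ∑ p ∈ n.primeFactors, c p * ordCompl[p] n
      ≤ n.primeFactors.card * (n - 1) := Finset.sum_le_card_nsmul _ _ _ hterm
    _ ≤ n * (n - 1) := Nat.mul_le_mul_right _ (card_primeFactors_le n)
    _ < n ^ 2 := by rw [sq]; exact Nat.mul_lt_mul_of_pos_left (by omega) (by omega)

end Nat

/-- Let `n ≥ 2` have prime power factorization `n = p₁^{e₁} ⋯ p_r^{e_r}`, and set
`b_i = n / p_i^{e_i}`. Every integer `k > n²` can be written as
`k = c₁ b₁ + ⋯ + c_r b_r` with nonnegative integers `c_i`; that is, the Frobenius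
number of `{b₁, …, b_r}` is at most `n²`. -/
theorem statement7 (n : ℕ) (hn : 2 ≤ n) (k : ℕ) (hk : n ^ 2 < k) :
    ∃ c : ℕ → ℕ, k = ∑ p ∈ n.primeFactors, c p * (n / p ^ (n.factorization p)) := by
  obtain ⟨c, hc_lt, hc_modEq⟩ := Nat.exists_sum_mul_ordCompl_modEq (by omega : n ≠ 0) k
  set S := ∑ p ∈ n.primeFactors, c p * ordCompl[p] n
  have hS_lt : S < k := (Nat.sum_mul_ordCompl_lt_sq (by omega) hc_lt).trans hk
  obtain ⟨m, hm⟩ := (Nat.modEq_iff_dvd' hS_lt.le).mp hc_modEq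
  obtain ⟨p₀, hp₀⟩ := Nat.nonempty_primeFactors.mpr (by omega : 1 < n)
  refine ⟨Function.update c p₀ (c p₀ + m * ordProj[p₀] n), ?_⟩
  have hrest : ∑ p ∈ n.primeFactors.erase p₀,
      Function.update c p₀ (c p₀ + m * ordProj[p₀] n) p * ordCompl[p] n =
      ∑ p ∈ n.primeFactors.erase p₀, c p * ordCompl[p] n :=
    Finset.sum_congr rfl fun p hp => by rw [Function.update_of_ne (Finset.ne_of_mem_erase hp)]
  rw [← Finset.add_sum_erase _ _ hp₀, hrest, Function.update_self, add_mul, mul_assoc,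
    Nat.ordProj_mul_ordCompl_eq_self, add_right_comm,
    Finset.add_sum_erase _ (fun p => c p * ordCompl[p] n) hp₀, mul_comm m n]
  omega
end

section
/- Let G be a finite group, let k ≥ 1, and let H be a subgroup of G contained in the center Z(G) of G. If both H and the quotient group G/H are k-round, then G is k-round. -/
/-!
Write `t = |G/H|`, `s = |H|`, so `|G| = t * s`, and expand an index `x : ℤ` in mixed radix as
`x = x % t + t * (x / t)`. From round cycles `q` of `G/H` and `h` of `H` build
`g x = out (q x) * h (x / t)`. Since `h` takes central values, a product of shifts
`g (x + m₁) ⋯ g (x + m_k)` splits into a lift of `q (x + m₁) ⋯ q (x + m_k)` times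
`h (x / t + c₁) ⋯ h (x / t + c_k)`, where the carries `cⱼ = (x % t + mⱼ) / t` depend only on
the low digit. So equal products force equal low digits (roundness of `q`), hence equal carries,
hence equal high digits (roundness of `h`).
-/

open Function

theorem Int.add_ediv_eq_ediv_add_emod_add_ediv (x m t : ℤ) :
    (x + m) / t = x / t + (x % t + m) / t := by
  rcases eq_or_ne t 0 with rfl | ht
  · simp
  · conv_lhs => rw [← Int.emod_add_mul_ediv x t]
    rw [add_right_comm, Int.add_mul_ediv_left _ _ ht, add_comm]

theorem Int.ModEq.of_ediv {t s x x' : ℤ} (hlow : x ≡ x' [ZMOD t])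
    (hhigh : x / t ≡ x' / t [ZMOD s]) : x ≡ x' [ZMOD t * s] := by
  have hsplit : x' - x = t * (x' / t - x / t) := by
    have hx := Int.emod_add_mul_ediv x t
    have hx' := Int.emod_add_mul_ediv x' t
    have hrem : x % t = x' % t := hlow
    linear_combination hx - hx' - hrem
  exact Int.modEq_of_dvd (hsplit ▸ mul_dvd_mul_left t hhigh.dvd)

theorem Function.Periodic.apply_val_add {α : Type*} {f : ℤ → α} {n : ℕ} [NeZero n]
    (hf : Periodic f n) (i : ZMod n) (m : ℤ) : f (i + m : ZMod n).val = f (i.val + m) := by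
  obtain ⟨c, hc⟩ :=
    (ZMod.intCast_eq_intCast_iff_dvd_sub ((i.val : ℤ) + m) ((i + m : ZMod n).val) n).1 (by simp)
  rw [sub_eq_iff_eq_add'.1 hc, mul_comm]
  exact hf.int_mul c _

theorem List.prod_ofFn_mul_of_commute {M : Type*} [Monoid M] {k : ℕ} (a b : Fin k → M)
    (hab : ∀ i j, Commute (a i) (b j)) :
    (List.ofFn fun j => a j * b j).prod = (List.ofFn a).prod * (List.ofFn b).prod := by
  induction k with
  | zero => simp
  | succ k ih =>
    have hcomm : Commute (b 0) (List.ofFn fun j => a j.succ).prod :=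
      Commute.list_prod_right _ _ fun x hx => by
        obtain ⟨j, rfl⟩ := List.mem_ofFn.1 hx
        exact (hab _ _).symm
    simp only [List.ofFn_succ, List.prod_cons]
    rw [ih _ _ fun i j => hab _ _, mul_assoc, mul_assoc, ← mul_assoc (b 0), hcomm.eq]
    simp only [mul_assoc]

theorem Subgroup.normal_of_le_center {G : Type*} [Group G] {H : Subgroup G}
    (hH : H ≤ center G) : H.Normal :=
  ⟨fun a ha g => by simpa [mem_center_iff.1 (hH ha) g] using ha⟩

section LiftedCycle

variable {G : Type*} [Group G] {H : Subgroup G}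
  (q : ZMod (Nat.card (G ⧸ H)) → G ⧸ H) (h : ZMod (Nat.card H) → H)

noncomputable def liftedCycle (x : ℤ) : G :=
  (q x).out * h (x / Nat.card (G ⧸ H) : ℤ)

theorem liftedCycle_periodic [Finite G] : Periodic (liftedCycle q h) (Nat.card G) := by
  intro x
  have ht : (Nat.card (G ⧸ H) : ℤ) ≠ 0 := by exact_mod_cast Nat.card_pos.ne'
  simp [liftedCycle, H.card_eq_card_quotient_mul_card_subgroup, Int.add_mul_ediv_left _ _ ht]

theorem mk_liftedCycle [H.Normal] (x : ℤ) : ((liftedCycle q h x : G) : G ⧸ H) = q x := by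
  simp [liftedCycle]

theorem prod_liftedCycle_add (hH : H ≤ Subgroup.center G) {k : ℕ} (x : ℤ)
    (m : Fin k → ℤ) :
    (List.ofFn fun j => liftedCycle q h (x + m j)).prod =
      (List.ofFn fun j => (q (x + m j : ℤ)).out).prod *
        (List.ofFn fun j => (h (x / Nat.card (G ⧸ H) +
          (x % Nat.card (G ⧸ H) + m j) / Nat.card (G ⧸ H) : ℤ) : G)).prod := by
  simp only [liftedCycle, Int.add_ediv_eq_ediv_add_emod_add_ediv x]
  exact List.prod_ofFn_mul_of_commute _ _ fun i j =>
    Subgroup.mem_center_iff.1 (hH (h _).2) _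

theorem modEq_of_prod_liftedCycle_add_eq [Finite G] [H.Normal] (hH : H ≤ Subgroup.center G)
    {k : ℕ} (hq : IsRoundCycle (G ⧸ H) k q) (hh : IsRoundCycle H k h) (m : Fin k → ℤ)
    {x x' : ℤ}
    (heq : (List.ofFn fun j => liftedCycle q h (x + m j)).prod =
      (List.ofFn fun j => liftedCycle q h (x' + m j)).prod) :
    x ≡ x' [ZMOD Nat.card G] := by
  have hlow : x ≡ x' [ZMOD Nat.card (G ⧸ H)] := by
    have hmk := congrArg (QuotientGroup.mk' H) heq
    simp only [map_list_prod, List.map_ofFn, comp_def, QuotientGroup.mk'_apply,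
      mk_liftedCycle, Int.cast_add] at hmk
    exact (ZMod.intCast_eq_intCast_iff _ _ _).1 ((hq m).injective hmk)
  have hcoset : ∀ j, q (x + m j : ℤ) = q (x' + m j : ℤ) := fun j => by
    rw [Int.cast_add, Int.cast_add, (ZMod.intCast_eq_intCast_iff _ _ _).2 hlow]
  rw [prod_liftedCycle_add q h hH, prod_liftedCycle_add q h hH, hlow] at heq
  simp only [hcoset] at heq
  have hhigh : x / (Nat.card (G ⧸ H) : ℤ) ≡ x' / Nat.card (G ⧸ H) [ZMOD Nat.card H] := by
    have hcarry := hh fun j => (x' % Nat.card (G ⧸ H) + m j) / (Nat.card (G ⧸ H) : ℤ)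
    refine (ZMod.intCast_eq_intCast_iff _ _ _).1 (hcarry.injective (H.subtype_injective ?_))
    simpa [map_list_prod, List.map_ofFn, comp_def] using mul_left_cancel heq
  rw [H.card_eq_card_quotient_mul_card_subgroup, Nat.cast_mul]
  exact hlow.of_ediv hhigh

end LiftedCycle

/-- If `H` is a subgroup of a finite group `G` contained in the center of `G`,
and both `H` and `G/H` are `k`-round, then `G` is `k`-round. -/
theorem statement8 (G : Type*) [Group G] [Finite G] (k : ℕ)
    (H : Subgroup G) (hH : H ≤ Subgroup.center G) :
    haveI : H.Normal :=
      ⟨fun a ha g => by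
        rw [(Subgroup.mem_center_iff.mp (hH ha)) g]
        simpa using ha⟩
    IsKRound H k → IsKRound (G ⧸ H) k → IsKRound G k := by
  have := Subgroup.normal_of_le_center hH
  rintro ⟨h, hh⟩ ⟨q, hq⟩
  refine ⟨fun i => liftedCycle q h i.val, fun m => ?_⟩
  refine (Nat.bijective_iff_injective_and_card _).2 ⟨fun i i' heq => ?_, by simp⟩
  simp only [(liftedCycle_periodic q h).apply_val_add] at heq
  simpa using (ZMod.intCast_eq_intCast_iff _ _ _).2
    (modEq_of_prod_liftedCycle_add_eq q h hH hq hh m heq)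
end

section
/- Let G₁ and G₂ be finite groups and k ≥ 1 an integer. If G₁ and G₂ are both k-round, then the direct product G₁ × G₂ is k-round. -/
/-! Write `i : ZMod (n₁ * n₂)` in mixed radix as `i = r + n₁ q` and take the cycle
`i ↦ (g₁ r, g₂ q)`. Shifting `i` by `m` shifts `r` by `m` and `q` by the carry
`⌊(r + m) / n₁⌋`, which depends on `r` only. So the shifted product of the cycle is, in digits,
the shear map `(r, q) ↦ (P₁ r, P₂^{c(r)} q)` built from a shifted product `P₁` of `g₁` and
shifted products `P₂^c` of `g₂`, a bijection as soon as all of them are. -/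

theorem List.prod_ofFn_prodMk {M N : Type*} [Monoid M] [Monoid N] {k : ℕ} (a : Fin k → M)
    (b : Fin k → N) :
    (List.ofFn fun j => (a j, b j)).prod = ((List.ofFn a).prod, (List.ofFn b).prod) := by
  induction k with
  | zero => rfl
  | succ k ih => simp [List.ofFn_succ, ih]

def shiftProd {M : Type*} [Monoid M] {n k : ℕ} (g : ZMod n → M) (m : Fin k → ℤ) (i : ZMod n) :
    M :=
  (List.ofFn fun j => g (i + (m j : ZMod n))).prod

section RadixDigits

variable {n₁ n₂ : ℕ}

def radixDigits (n₁ n₂ : ℕ) {N : ℕ} (i : ZMod N) : ZMod n₁ × ZMod n₂ :=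
  ((i.val : ZMod n₁), ((i.val / n₁ : ℕ) : ZMod n₂))

def radixCarry (r : ZMod n₁) (m : ℤ) : ℤ := ((r.val : ℤ) + m) / n₁

variable [NeZero n₁] [NeZero n₂]

theorem radixDigits_intCast (a : ℤ) :
    radixDigits n₁ n₂ (a : ZMod (n₁ * n₂)) = ((a : ZMod n₁), ((a / n₁ : ℤ) : ZMod n₂)) := by
  have hval : ((a : ZMod (n₁ * n₂)).val : ℤ) = a % (n₁ * n₂ : ℕ) := ZMod.val_intCast a
  push_cast at hval
  have hdiv : a / n₁ = a % (n₁ * n₂ : ℤ) / n₁ + n₂ * (a / (n₁ * n₂ : ℤ)) := by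
    conv_lhs => rw [← Int.emod_add_mul_ediv a (n₁ * n₂ : ℤ), mul_assoc]
    exact Int.add_mul_ediv_left _ _ (by exact_mod_cast NeZero.ne n₁)
  refine Prod.ext ?_ ?_
  · dsimp only [radixDigits]
    rw [← Int.cast_natCast, hval, ZMod.intCast_eq_intCast_iff']
    exact Int.emod_emod_of_dvd a (dvd_mul_right _ _)
  · dsimp only [radixDigits]
    rw [← Int.cast_natCast, Int.natCast_div, hval, hdiv]
    simp

theorem radixDigits_add_intCast (i : ZMod (n₁ * n₂)) (m : ℤ) :
    radixDigits n₁ n₂ (i + (m : ZMod (n₁ * n₂))) =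
      ((radixDigits n₁ n₂ i).1 + m,
        (radixDigits n₁ n₂ i).2 + radixCarry (radixDigits n₁ n₂ i).1 m) := by
  set v := i.val
  have hsum : i + (m : ZMod (n₁ * n₂)) = ((v + m : ℤ) : ZMod (n₁ * n₂)) := by
    push_cast; rw [ZMod.natCast_zmod_val]
  have hcarry : ((v : ℤ) + m) / n₁ = (v / n₁ : ℕ) + radixCarry (v : ZMod n₁) m := by
    have : (v : ℤ) + m = (((v % n₁ : ℕ) : ℤ) + m) + n₁ * (v / n₁ : ℕ) := by
      push_cast; linear_combination (Int.emod_add_mul_ediv (v : ℤ) n₁).symm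
    rw [this, Int.add_mul_ediv_left _ _ (by exact_mod_cast NeZero.ne n₁), radixCarry,
      ZMod.val_natCast, add_comm]
  rw [hsum, radixDigits_intCast, hcarry]
  simp only [Int.cast_add, Int.cast_natCast]
  rfl

theorem radixDigits_injective :
    Function.Injective (radixDigits n₁ n₂ : ZMod (n₁ * n₂) → ZMod n₁ × ZMod n₂) := by
  intro i i' h
  simp only [radixDigits, Prod.mk.injEq, ZMod.natCast_eq_natCast_iff'] at h
  obtain ⟨hmod, hdiv⟩ := h
  rw [← Nat.mod_mul_right_div_self, ← Nat.mod_mul_right_div_self,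
    Nat.mod_eq_of_lt (ZMod.val_lt i), Nat.mod_eq_of_lt (ZMod.val_lt i')] at hdiv
  apply ZMod.val_injective
  rw [← Nat.div_add_mod i.val n₁, ← Nat.div_add_mod i'.val n₁, hmod, hdiv]

theorem radixDigits_bijective :
    Function.Bijective (radixDigits n₁ n₂ : ZMod (n₁ * n₂) → ZMod n₁ × ZMod n₂) :=
  radixDigits_injective.bijective_of_nat_card_le (by simp)

end RadixDigits

section ProductCycle

variable {G₁ G₂ : Type*} [Monoid G₁] [Monoid G₂] {n₁ n₂ k : ℕ}

def productCycle {N : ℕ} (g₁ : ZMod n₁ → G₁) (g₂ : ZMod n₂ → G₂) : ZMod N → G₁ × G₂ :=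
  Prod.map g₁ g₂ ∘ radixDigits n₁ n₂

variable [NeZero n₁] [NeZero n₂] (g₁ : ZMod n₁ → G₁) (g₂ : ZMod n₂ → G₂)

theorem shiftProd_productCycle (m : Fin k → ℤ) (i : ZMod (n₁ * n₂)) :
    shiftProd (productCycle g₁ g₂) m i =
      (shiftProd g₁ m (radixDigits n₁ n₂ i).1,
        shiftProd g₂ (fun j => radixCarry (radixDigits n₁ n₂ i).1 (m j))
          (radixDigits n₁ n₂ i).2) := by
  simp only [shiftProd, productCycle, Function.comp_apply, radixDigits_add_intCast, Prod.map]
  exact List.prod_ofFn_prodMk _ _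

/- The length `N` is kept apart from `n₁ * n₂`: for the cycle of `G₁ × G₂` it is
`Nat.card (G₁ × G₂)`, which equals `Nat.card G₁ * Nat.card G₂` only propositionally. -/
theorem bijective_shiftProd_productCycle {N : ℕ} (hN : N = n₁ * n₂) {m : Fin k → ℤ}
    (h₁ : Function.Bijective (shiftProd g₁ m))
    (h₂ : ∀ c : Fin k → ℤ, Function.Bijective (shiftProd g₂ c)) :
    Function.Bijective (shiftProd (productCycle g₁ g₂ : ZMod N → G₁ × G₂) m) := by
  subst hN
  let e := Equiv.prodShear (Equiv.ofBijective _ h₁)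
    fun r => Equiv.ofBijective _ (h₂ fun j => radixCarry r (m j))
  have he : shiftProd (productCycle g₁ g₂) m = e ∘ radixDigits n₁ n₂ :=
    funext (shiftProd_productCycle g₁ g₂ m)
  rw [he]
  exact e.bijective.comp radixDigits_bijective

end ProductCycle

theorem statement9_general (G₁ G₂ : Type*) [Group G₁] [Group G₂] [Finite G₁] [Finite G₂]
    (k : ℕ) (h₁ : IsKRound G₁ k) (h₂ : IsKRound G₂ k) :
    IsKRound (G₁ × G₂) k := by
  obtain ⟨g₁, hg₁⟩ := h₁
  obtain ⟨g₂, hg₂⟩ := h₂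
  exact ⟨productCycle g₁ g₂,
    fun m => bijective_shiftProd_productCycle g₁ g₂ (Nat.card_prod G₁ G₂) (hg₁ m) hg₂⟩

/-- If finite groups `G₁` and `G₂` are both `k`-round, then `G₁ × G₂` is `k`-round. -/
theorem statement9 (G₁ G₂ : Type*) [Group G₁] [Group G₂] [Finite G₁] [Finite G₂]
    (k : ℕ) (hk : 1 ≤ k) (h₁ : IsKRound G₁ k) (h₂ : IsKRound G₂ k) :
    IsKRound (G₁ × G₂) k :=
  statement9_general G₁ G₂ k h₁ h₂
end

section
/- Let p and q be odd primes with p < q, and let G be a non-abelian group of order pq. Then G is 2-round. -/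
/-!
Let `a` have order `q` and `b` order `p`. Since `p` is the smallest prime factor of `|G|`,
`⟨a⟩` is normal, so `b a = a ^ k b` where `κ = k mod q` satisfies `κ ^ p = 1`. The cycle
`g i = a ^ i * b ^ i` is 2-round: with `x = i + m₁`, `y = i + m₂` one gets
`g x * g y = a ^ (x + y κ ^ x) * b ^ (x + y)`, and such normal forms are unique. The
exponent `2 i + m₁ + m₂` of `b` determines `i` mod `p` since `p` is odd, hence `κ ^ x`; the
exponent of `a` is then `(1 + κ ^ x) i + const` mod `q`, and `1 + κ ^ x ≠ 0` as `κ ^ x` is a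
root of unity of odd order in a field of odd characteristic. The Chinese remainder theorem
recovers `i`.
-/

open Subgroup

theorem SemiconjBy.pow_pow {M : Type*} [Monoid M] {a b : M} {k : ℕ} (hk : SemiconjBy b a (a ^ k)) (t m : ℕ) :
    SemiconjBy (b ^ t) (a ^ m) (a ^ (m * k ^ t)) := by
  induction t with
  | zero => simp
  | succ t ih =>
    rw [pow_succ', show m * k ^ (t + 1) = k * (m * k ^ t) by ring, pow_mul]
    exact (hk.pow_right _).mul_left ih

namespace ZMod

theorem eq_of_cast_eq_of_cast_eq {m n N : ℕ} (hN : N = m * n) (h : m.Coprime n)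
    {x y : ZMod N} (hm : (cast x : ZMod m) = cast y) (hn : (cast x : ZMod n) = cast y) : x = y := by
  subst hN
  exact (chineseRemainder h).injective <| Prod.ext (by simpa [chineseRemainder, Prod.fst_zmod_cast])
    (by simpa [chineseRemainder, Prod.snd_zmod_cast])

theorem two_ne_zero_of_odd {p : ℕ} [Fact p.Prime] (hp : Odd p) : (2 : ZMod p) ≠ 0 := by
  intro h
  have h2 : p ∣ 2 := (natCast_eq_zero_iff 2 p).mp (by exact_mod_cast h)
  exact (Fact.out : p.Prime).ne_one ((Nat.coprime_two_right.mpr hp).eq_one_of_dvd h2)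

end ZMod

theorem one_add_ne_zero_of_pow_eq_one {R : Type*} [CommRing R] {w : R} {p : ℕ} (hp : Odd p)
    (h2 : (2 : R) ≠ 0) (hw : w ^ p = 1) : 1 + w ≠ 0 := by
  intro h
  rw [eq_neg_of_add_eq_zero_right h, hp.neg_one_pow] at hw
  exact h2 (by linear_combination -hw)

theorem Nat.minFac_mul_eq_of_lt {p q : ℕ} (hp : p.Prime) (hq : q.Prime) (hpq : p < q) :
    (p * q).minFac = p := by
  have hmin : (p * q).minFac.Prime := Nat.minFac_prime (Nat.one_lt_mul_iff.mpr
    ⟨hp.pos, hq.pos, Or.inl hp.one_lt⟩).ne'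
  have hle : (p * q).minFac ≤ p := Nat.minFac_le_of_dvd hp.two_le (dvd_mul_right p q)
  rcases hmin.dvd_mul.mp (Nat.minFac_dvd (p * q)) with h | h
  · exact (Nat.prime_dvd_prime_iff_eq hmin hp).mp h
  · rw [(Nat.prime_dvd_prime_iff_eq hmin hq).mp h] at hle
    omega

section Group

variable {G : Type*} [Group G]

theorem pow_eq_pow_iff_natCast_eq (x : G) {n m : ℕ} :
    x ^ n = x ^ m ↔ (n : ZMod (orderOf x)) = m := by
  rw [pow_eq_pow_iff_modEq, ZMod.natCast_eq_natCast_iff]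

theorem pow_mul_pow_eq_pow_mul_pow_iff {a b : G} (h : (orderOf a).Coprime (orderOf b))
    {s t s' t' : ℕ} : a ^ s * b ^ t = a ^ s' * b ^ t' ↔
      (s : ZMod (orderOf a)) = s' ∧ (t : ZMod (orderOf b)) = t' := by
  have hdisj : Disjoint (zpowers a) (zpowers b) :=
    disjoint_of_coprime_natCard (by rwa [Nat.card_zpowers, Nat.card_zpowers])
  rw [← pow_eq_pow_iff_natCast_eq, ← pow_eq_pow_iff_natCast_eq]
  refine ⟨fun hst => ?_, fun ⟨hs, ht⟩ => by rw [hs, ht]⟩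
  have := mul_injective_of_disjoint hdisj (a₁ := (⟨a ^ s, pow_mem (mem_zpowers a) s⟩,
    ⟨b ^ t, pow_mem (mem_zpowers b) t⟩)) (a₂ := (⟨a ^ s', pow_mem (mem_zpowers a) s'⟩,
    ⟨b ^ t', pow_mem (mem_zpowers b) t'⟩)) hst
  simpa [Prod.ext_iff] using this

theorem Subgroup.Normal.exists_semiconjBy_pow {a : G} (h : (zpowers a).Normal)
    (ha : IsOfFinOrder a) (b : G) : ∃ k : ℕ, SemiconjBy b a (a ^ k) := by
  obtain ⟨k, hk : a ^ k = _⟩ :=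
    ha.mem_powers_iff_mem_zpowers.mpr (h.conj_mem a (mem_zpowers a) b)
  exact ⟨k, by rw [SemiconjBy, hk, inv_mul_cancel_right]⟩

theorem SemiconjBy.natCast_pow_orderOf_eq_one {a b : G} {k : ℕ} (hk : SemiconjBy b a (a ^ k)) :
    (k : ZMod (orderOf a)) ^ orderOf b = 1 := by
  have h := (hk.pow_pow (orderOf b) 1).eq
  rw [pow_orderOf_eq_one, one_mul, mul_one, pow_eq_pow_iff_natCast_eq] at h
  simpa using h.symm

theorem normal_zpowers_of_card_eq_mul {p q : ℕ} (hp : p.Prime) (hq : q.Prime) (hpq : p < q)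
    (hcard : Nat.card G = p * q) {a : G} (ha : orderOf a = q) : (zpowers a).Normal := by
  refine normal_of_index_eq_minFac_card ?_
  rw [hcard, Nat.minFac_mul_eq_of_lt hp hq hpq]
  have := card_mul_index (zpowers a)
  rw [Nat.card_zpowers, ha, hcard, mul_comm p] at this
  exact Nat.eq_of_mul_eq_mul_left hq.pos this

def powCycle (a b : G) (n : ℕ) (i : ZMod n) : G :=
  a ^ i.val * b ^ i.val

theorem powCycle_mul_powCycle {a b : G} {k : ℕ} (hk : SemiconjBy b a (a ^ k)) {n : ℕ}
    (x y : ZMod n) : powCycle a b n x * powCycle a b n y =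
      a ^ (x.val + y.val * k ^ x.val) * b ^ (x.val + y.val) := by
  rw [powCycle, powCycle, mul_assoc, ← mul_assoc (b ^ x.val), (hk.pow_pow _ _).eq]
  simp only [pow_add, mul_assoc]

theorem isRoundCycle_two_powCycle {p q : ℕ} [Fact p.Prime] [Fact q.Prime] (hp : Odd p)
    (hq : Odd q) (hpq : p ≠ q) [Finite G] (hcard : Nat.card G = p * q) {a b : G}
    (ha : orderOf a = q) (hb : orderOf b = p) {k : ℕ} (hk : SemiconjBy b a (a ^ k)) :
    IsRoundCycle G 2 (powCycle a b (Nat.card G)) := by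
  intro m
  have hcop : p.Coprime q := (Nat.coprime_primes Fact.out Fact.out).mpr hpq
  have hpn : p ∣ Nat.card G := hcard ▸ dvd_mul_right p q
  have hqn : q ∣ Nat.card G := hcard ▸ dvd_mul_left q p
  have : NeZero (Nat.card G) := ⟨by rw [hcard]; exact mul_ne_zero (NeZero.ne p) (NeZero.ne q)⟩
  refine (Nat.bijective_iff_injective_and_card _).mpr ⟨fun i j h => ?_, Nat.card_zmod _⟩
  simp only [List.ofFn_succ, List.ofFn_zero, List.prod_cons, List.prod_nil, mul_one] at h
  rw [powCycle_mul_powCycle hk, powCycle_mul_powCycle hk,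
    pow_mul_pow_eq_pow_mul_pow_iff (by rw [ha, hb]; exact hcop.symm), ha, hb] at h
  obtain ⟨hA, hB⟩ := h
  have hκ : (k : ZMod q) ^ p = 1 := by
    have := hk.natCast_pow_orderOf_eq_one
    rw [ha, hb] at this
    exact this
  push_cast [ZMod.natCast_val, ZMod.cast_add hpn, ZMod.cast_add hqn] at hA hB
  have hip : (i.cast : ZMod p) = j.cast :=
    mul_left_cancel₀ (ZMod.two_ne_zero_of_odd hp) (by linear_combination hB)
  have hw : (k : ZMod q) ^ (i + m 0).val = (k : ZMod q) ^ (j + m 0).val := by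
    refine pow_eq_pow_of_modEq ?_ hκ
    rw [← ZMod.natCast_eq_natCast_iff, ZMod.natCast_val, ZMod.natCast_val, ZMod.cast_add hpn,
      ZMod.cast_add hpn, hip]
  have hw₁ : 1 + (k : ZMod q) ^ (i + m 0).val ≠ 0 :=
    one_add_ne_zero_of_pow_eq_one hp (ZMod.two_ne_zero_of_odd hq)
      (by rw [← pow_mul, mul_comm, pow_mul, hκ, one_pow])
  have hiq : (i.cast : ZMod q) = j.cast :=
    mul_right_cancel₀ hw₁
      (by linear_combination hA - (j.cast + (m 1 : ZMod (Nat.card G)).cast) * hw)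
  exact ZMod.eq_of_cast_eq_of_cast_eq hcard hcop hip hiq

end Group

theorem statement13_general (p q : ℕ) (hp : p.Prime) (hq : q.Prime) (hpodd : Odd p)
    (hqodd : Odd q) (hpq : p < q) (G : Type*) [Group G] [Finite G]
    (hcard : Nat.card G = p * q) :
    IsKRound G 2 := by
  have : Fact p.Prime := ⟨hp⟩
  have : Fact q.Prime := ⟨hq⟩
  obtain ⟨a, ha⟩ := exists_prime_orderOf_dvd_card' q (hcard ▸ dvd_mul_left q p)
  obtain ⟨b, hb⟩ := exists_prime_orderOf_dvd_card' p (hcard ▸ dvd_mul_right p q)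
  obtain ⟨k, hk⟩ := (normal_zpowers_of_card_eq_mul hp hq hpq hcard ha).exists_semiconjBy_pow
    (isOfFinOrder_of_finite a) b
  exact ⟨powCycle a b _, isRoundCycle_two_powCycle hpodd hqodd hpq.ne hcard ha hb hk⟩

/-- Let `p` and `q` be odd primes with `p < q`, and let `G` be a non-abelian group of
order `pq`. Then `G` is `2`-round. -/
theorem statement13 (p q : ℕ) (hp : p.Prime) (hq : q.Prime) (hpodd : Odd p)
    (hqodd : Odd q) (hpq : p < q) (G : Type*) [Group G] [Finite G]
    (hcard : Nat.card G = p * q) (hnonab : ∃ a b : G, a * b ≠ b * a) :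
    IsKRound G 2 :=
  statement13_general p q hp hq hpodd hqodd hpq G hcard
end

section
/- Every finite group G is D^r-balanced for every integer r ≥ 1: for each r there is a cycle g over G of some length L divisible by the order n of G such that D^s(g) is balanced for all integers 0 ≤ s ≤ r. (One may take L = n^{r+1} and g a De Bruijn cycle of order r+1 over G.) -/
/-- The difference operator `D` on cycles of length `L` over `G`:
`D(g)(i) = g(i) * g(i+1)⁻¹`. -/
def Dop {G : Type*} [Group G] {L : ℕ} (g : ZMod L → G) : ZMod L → G :=
  fun i => g i * (g (i + 1))⁻¹

/-- A cycle of length `L` over a group `G` of order `n` (with `n ∣ L`) is balanced if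
every element of `G` occurs exactly `L / n` times among its values. -/
def IsBalanced (G : Type*) [Group G] {L : ℕ} (g : ZMod L → G) : Prop :=
  ∀ x : G, Nat.card {i : ZMod L // g i = x} = L / Nat.card G

/-!
Call a cycle `h` *window-uniform* in length `m` if every word of length `m` occurs equally often
among its cyclic windows `h p, h (p + 1), …, h (p + m - 1)`. As
`Dop h (p + j) = h (p + j) * (h (p + j + 1))⁻¹`, a window of `h` of length `m + 1` corresponds
bijectively to its first letter together with the window of `Dop h` of length `m` at the same
place. Hence `Dop` turns uniform windows of length `m + 1` into uniform windows of length `m`,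
and uniform windows of positive length force balance.

It remains to find a cycle with uniform windows of length `k = r + 1`. Instead of a De Bruijn
cycle we take the concatenation of the `k`-digit base-`n` expansions (least significant digit
first) of `0, 1, …, n ^ k - 1`. The window of length `k` starting at digit `ρ` of the expansion
of `t` consists of the digits `≥ ρ` of `t` followed by the digits `< ρ` of `t + 1`, and these
determine `t`; so every word occurs exactly `k` times, once for each starting digit `ρ`.
-/
open Function

theorem card_subtype_eq_card_mul_of_card_fiber {α β : Type*} [Finite α] [Finite β]
    (P : α → Prop) (f : α → β) {c : ℕ} (hf : ∀ b, Nat.card {a // P a ∧ f a = b} = c) :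
    Nat.card {a // P a} = Nat.card β * c := by
  have := Fintype.ofFinite β
  have hfiber : ∀ b, Nat.card {a : {a // P a} // f a = b} = c := fun b =>
    (Nat.card_congr (Equiv.subtypeSubtypeEquivSubtypeInter _ _)).trans (hf b)
  rw [← Nat.card_congr (Equiv.sigmaFiberEquiv fun a : {a // P a} => f a), Nat.card_sigma,
    Finset.sum_congr rfl fun b _ => hfiber b, Finset.sum_const, Finset.card_univ, smul_eq_mul,
    Nat.card_eq_fintype_card]

section Windows

variable {G : Type*} {L : ℕ}

def HasUniformWindows (h : ZMod L → G) (m c : ℕ) : Prop :=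
  ∀ w : ℕ → G, Nat.card {p : ZMod L // ∀ j < m, h (p + j) = w j} = c

variable [Finite G] [NeZero L] {h : ZMod L → G} {m c : ℕ}

theorem HasUniformWindows.of_succ (hh : HasUniformWindows h (m + 1) c) :
    HasUniformWindows h m (Nat.card G * c) := by
  classical
  intro w
  refine card_subtype_eq_card_mul_of_card_fiber _ (fun p => h (p + m)) fun b => ?_
  rw [← hh (update w m b)]
  refine Nat.card_congr (Equiv.subtypeEquivRight fun p => ?_)
  rw [Nat.forall_lt_succ_right, update_self]
  refine and_congr_left' (forall₂_congr fun j hj => ?_)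
  rw [update_of_ne hj.ne]

theorem HasUniformWindows.of_add {d : ℕ} (hh : HasUniformWindows h (m + d) c) :
    HasUniformWindows h m (Nat.card G ^ d * c) := by
  induction d generalizing c with
  | zero => simpa using hh
  | succ d ih => simpa only [pow_succ, mul_assoc] using ih hh.of_succ

theorem HasUniformWindows.isBalanced [Group G] (hh : HasUniformWindows h m c) (hm : 0 < m) :
    IsBalanced G h := by
  obtain ⟨d, rfl⟩ : ∃ d, m = 1 + d := ⟨m - 1, by omega⟩
  have h1 := hh.of_add
  have hL : L = Nat.card G * (Nat.card G ^ d * c) := by simpa using h1.of_succ (fun _ => 1)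
  have hc : L / Nat.card G = Nat.card G ^ d * c := by
    rw [hL, Nat.mul_div_cancel_left _ Nat.card_pos]
  intro x
  rw [hc, ← h1 fun _ => x]
  exact Nat.card_congr (Equiv.subtypeEquivRight fun p => by simp)

end Windows

section Difference

variable {G : Type*} [Group G] {L : ℕ}

def dopPreimage (w : ℕ → G) (b : G) : ℕ → G
  | 0 => b
  | j + 1 => (w j)⁻¹ * dopPreimage w b j

theorem dop_eq_iff {h : ZMod L → G} {q : ZMod L} {a : G} (hq : h q = a) (c : G) :
    Dop h q = c ↔ h (q + 1) = c⁻¹ * a := by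
  rw [Dop, hq, mul_inv_eq_iff_eq_mul, eq_inv_mul_iff_mul_eq, eq_comm]

theorem window_dop_iff (h : ZMod L → G) (p : ZMod L) (w : ℕ → G) (b : G) (m : ℕ) :
    (h p = b ∧ ∀ j < m, Dop h (p + j) = w j) ↔
      ∀ j < m + 1, h (p + j) = dopPreimage w b j := by
  induction m with
  | zero => simp [dopPreimage]
  | succ m ih =>
    rw [Nat.forall_lt_succ_right, ← and_assoc, ih, Nat.forall_lt_succ_right (n := m + 1)]
    refine and_congr_right fun hwin => ?_
    rw [dop_eq_iff (hwin m m.lt_succ_self), add_assoc, ← Nat.cast_succ]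
    rfl

variable [Finite G] [NeZero L] {h : ZMod L → G} {m c : ℕ}

theorem HasUniformWindows.dop (hh : HasUniformWindows h (m + 1) c) :
    HasUniformWindows (Dop h) m (Nat.card G * c) := by
  intro w
  refine card_subtype_eq_card_mul_of_card_fiber _ h fun b => ?_
  rw [← hh (dopPreimage w b)]
  exact Nat.card_congr (Equiv.subtypeEquivRight fun p => and_comm.trans (window_dop_iff h p w b m))

theorem HasUniformWindows.iterate_dop {s : ℕ} (hh : HasUniformWindows h (m + s) c) :
    HasUniformWindows (Dop^[s] h) m (Nat.card G ^ s * c) := by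
  induction s generalizing h c with
  | zero => simpa using hh
  | succ s ih => simpa only [iterate_succ_apply, pow_succ, mul_assoc] using ih hh.dop

end Difference

theorem hasUniformWindows_of_injective {G ι : Type*} [Finite G] [Finite ι] {L : ℕ} [NeZero L]
    {m : ℕ} (hL : L = Nat.card ι * Nat.card G ^ m) (h : ZMod L → G) (f : ZMod L → ι)
    (hinj : Injective fun p => (f p, fun j : Fin m => h (p + j))) :
    HasUniformWindows h m (Nat.card ι) := by
  have hbij := hinj.bijective_of_nat_card_le (by simp [Nat.card_fun, hL])
  intro w
  let fiberEquiv : {x : ι × (Fin m → G) // x.2 = fun j : Fin m => w j} ≃ ι :=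
    { toFun := fun x => x.1.1
      invFun := fun i => ⟨(i, fun j => w j), rfl⟩
      left_inv := fun x => Subtype.ext (Prod.ext rfl x.2.symm)
      right_inv := fun _ => rfl }
  rw [← Nat.card_congr fiberEquiv]
  refine Nat.card_congr ((Equiv.ofBijective _ hbij).subtypeEquiv fun p => ?_)
  simp [funext_iff, Fin.forall_iff]

namespace Nat

theorem eq_of_forall_digit_eq {n m u v : ℕ} (hu : u < n ^ m) (hv : v < n ^ m)
    (h : ∀ i < m, u / n ^ i % n = v / n ^ i % n) : u = v := by
  have := finFunctionFinEquiv.symm.injective (a₁ := ⟨u, hu⟩) (a₂ := ⟨v, hv⟩)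
    (funext fun i => Fin.ext (by simpa [finFunctionFinEquiv_symm_apply_val] using h i i.2))
  simpa using this

theorem mod_pow_div_pow_mod {n i ρ : ℕ} (a : ℕ) (hi : i < ρ) :
    a % n ^ ρ / n ^ i % n = a / n ^ i % n := by
  rw [show n ^ ρ = n ^ i * n ^ (ρ - i) by rw [← pow_add]; congr; omega,
    Nat.mod_mul_right_div_self, Nat.mod_mod_of_dvd _ (dvd_pow_self n (by omega))]

theorem add_pow_div_pow_mod {n x k : ℕ} (hn : 0 < n) (a : ℕ) (hx : x < k) :
    (a + n ^ k) / n ^ x % n = a / n ^ x % n := by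
  rw [show n ^ k = n * n ^ (k - x - 1) * n ^ x by rw [← pow_succ', ← pow_add]; congr; omega,
    Nat.add_mul_div_right _ _ (pow_pos hn x), Nat.add_mul_mod_self_left]

theorem eq_of_high_digits_eq_of_succ_low_digits_eq {n k ρ t s : ℕ} (hn : 0 < n) (hρ : ρ ≤ k)
    (ht : t < n ^ k) (hs : s < n ^ k)
    (hhigh : ∀ i, ρ ≤ i → i < k → t / n ^ i % n = s / n ^ i % n)
    (hlow : ∀ i < ρ, (t + 1) / n ^ i % n = (s + 1) / n ^ i % n) : t = s := by
  have hdiv_lt : ∀ a < n ^ k, a / n ^ ρ < n ^ (k - ρ) := fun a ha => by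
    rwa [Nat.div_lt_iff_lt_mul (pow_pos hn ρ), ← pow_add, Nat.sub_add_cancel hρ]
  have hquot : t / n ^ ρ = s / n ^ ρ := by
    refine eq_of_forall_digit_eq (hdiv_lt t ht) (hdiv_lt s hs) fun i hi => ?_
    simpa only [Nat.div_div_eq_div_mul, ← pow_add] using hhigh (ρ + i) (by omega) (by omega)
  have hsucc : (t + 1) % n ^ ρ = (s + 1) % n ^ ρ := by
    refine eq_of_forall_digit_eq (Nat.mod_lt _ (pow_pos hn ρ)) (Nat.mod_lt _ (pow_pos hn ρ))
      fun i hi => ?_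
    rw [mod_pow_div_pow_mod _ hi, mod_pow_div_pow_mod _ hi]
    exact hlow i hi
  have hrem : t % n ^ ρ = s % n ^ ρ := Nat.ModEq.add_right_cancel' 1 hsucc
  rw [← Nat.div_add_mod t (n ^ ρ), hquot, hrem, Nat.div_add_mod]

end Nat

def concatDigits (n k q : ℕ) : ℕ := q / k / n ^ (q % k) % n

theorem concatDigits_mul_add {n k x : ℕ} (t : ℕ) (hx : x < k) :
    concatDigits n k (k * t + x) = t / n ^ x % n := by
  rw [concatDigits, Nat.mul_add_div (by omega), Nat.mul_add_mod, Nat.div_eq_of_lt hx,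
    Nat.mod_eq_of_lt hx, add_zero]

theorem concatDigits_periodic {n k : ℕ} (hn : 0 < n) :
    Periodic (concatDigits n k) (k * n ^ k) := fun q => by
  rcases k.eq_zero_or_pos with rfl | hk
  · simp
  rw [concatDigits, concatDigits, Nat.add_mul_div_left _ _ hk, Nat.add_mul_mod_self_left,
    Nat.add_pow_div_pow_mod hn _ (Nat.mod_lt q hk)]

theorem concatDigits_window_injective {n k p q : ℕ} (hn : 0 < n)
    (hp : p < k * n ^ k) (hq : q < k * n ^ k) (hpq : p % k = q % k)
    (hwin : ∀ j < k, concatDigits n k (p + j) = concatDigits n k (q + j)) : p = q := by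
  have hk : 0 < k := Nat.pos_of_ne_zero (by rintro rfl; simp at hp)
  have hρ : p % k < k := Nat.mod_lt p hk
  have hdiv : ∀ a < k * n ^ k, a / k < n ^ k := fun a ha => by
    rwa [Nat.div_lt_iff_lt_mul hk, mul_comm]
  have hp' := Nat.div_add_mod p k
  have hq' := Nat.div_add_mod q k
  have hts : p / k = q / k := by
    refine Nat.eq_of_high_digits_eq_of_succ_low_digits_eq hn hρ.le (hdiv p hp) (hdiv q hq)
      (fun i hi hik => ?_) (fun i hi => ?_)
    · have := hwin (i - p % k) (by omega)
      rwa [show p + (i - p % k) = k * (p / k) + i by omega,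
        show q + (i - p % k) = k * (q / k) + i by omega,
        concatDigits_mul_add _ hik, concatDigits_mul_add _ hik] at this
    · have hik : i < k := by omega
      have := hwin (k - p % k + i) (by omega)
      rwa [show p + (k - p % k + i) = k * (p / k + 1) + i by rw [mul_add]; omega,
        show q + (k - p % k + i) = k * (q / k + 1) + i by rw [mul_add]; omega,
        concatDigits_mul_add _ hik, concatDigits_mul_add _ hik] at this
  rw [← hp', ← hq', hts, hpq]

theorem exists_hasUniformWindows (G : Type*) [Finite G] [Nonempty G] {k : ℕ} [NeZero k] :
    ∃ g : ZMod (k * Nat.card G ^ k) → G, HasUniformWindows g k k := by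
  have hn : 0 < Nat.card G := Nat.card_pos
  have : NeZero (k * Nat.card G ^ k) := ⟨Nat.mul_ne_zero (NeZero.ne k) (pow_pos hn k).ne'⟩
  let e := Finite.equivFin G
  let g : ZMod (k * Nat.card G ^ k) → G :=
    fun p => e.symm ⟨concatDigits (Nat.card G) k p.val, Nat.mod_lt _ hn⟩
  refine ⟨g, ?_⟩
  have hwin := hasUniformWindows_of_injective (m := k) (by simp) g (fun p => (p.val : ZMod k)) ?_
  · simpa using hwin
  rintro p q hpq
  simp only [Prod.mk.injEq, funext_iff] at hpq
  obtain ⟨hres, hwin⟩ := hpq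
  apply ZMod.val_injective
  refine concatDigits_window_injective hn p.val_lt q.val_lt
    ((ZMod.natCast_eq_natCast_iff' _ _ _).1 hres) fun j hj => ?_
  have := congrArg (fun x => (e x : ℕ)) (hwin ⟨j, hj⟩)
  simpa [g, ZMod.val_add, ZMod.val_natCast, Nat.add_mod_mod,
    (concatDigits_periodic hn).map_mod_nat] using this

theorem statement18_general (G : Type*) [Group G] [Finite G] (r : ℕ) :
    ∃ L : ℕ, 0 < L ∧ Nat.card G ∣ L ∧
      ∃ g : ZMod L → G, ∀ s : ℕ, s ≤ r → IsBalanced G (Dop^[s] g) := by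
  obtain ⟨g, hg⟩ := exists_hasUniformWindows G (k := r + 1)
  refine ⟨_, Nat.pos_of_neZero _, Dvd.dvd.mul_left (dvd_pow_self _ r.succ_ne_zero) _, g,
    fun s hs => ?_⟩
  have hg' : HasUniformWindows g (r + 1 - s + s) (r + 1) := by rwa [Nat.sub_add_cancel (by omega)]
  exact hg'.iterate_dop.isBalanced (by omega)

/-- Every finite group `G` is `D^r`-balanced for every `r ≥ 1`: there is a cycle `g`
over `G` of some length `L` divisible by the order of `G` such that `D^s(g)` is
balanced for all `0 ≤ s ≤ r`. -/
theorem statement18 (G : Type*) [Group G] [Finite G] (r : ℕ) (hr : 1 ≤ r) :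
    ∃ L : ℕ, 0 < L ∧ Nat.card G ∣ L ∧
      ∃ g : ZMod L → G, ∀ s : ℕ, s ≤ r → IsBalanced G (Dop^[s] g) :=
  statement18_general G r
end
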